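/- arXiv:1606.03142 — 2 statements merged into one kernel-verified Lean document; each statement's English description precedes it below -/
import Mathlib

section
/- Let g ≥ 2 and let k, l be integers with 1 ≤ k < l ≤ g. Then there do not exist a real 2g×2g matrix A satisfying AᵀJ_{2g}A = J_{2g} or AᵀJ_{2g}A = −J_{2g}, together with an integer 2×2 matrix B of determinant 1 or −1, such that P_k · A = B · P_l (where B and P_k, P_l are regarded as real matrices). -/
/-!
Conjugating by the blocks `P_k` turns `J_{2g}` into `k • J` with `J = !![0, 1; -1, 0]`, and
every `2 × 2` matrix `M` satisfies `M J Mᵀ = det M • J`. Since `Sp^±(2g)` is closed under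
transposition, `A J_{2g} Aᵀ = ε J_{2g}` with `ε = ±1`, so `P_k A = B P_l` gives
`ε k J = P_k A J_{2g} Aᵀ P_kᵀ = B P_l J_{2g} P_lᵀ Bᵀ = l (det B) J`, i.e. `k = ± l`, which is
impossible for `0 ≤ k < l`.
-/

open Matrix

/-- `J`, the standard 2×2 symplectic block, assembled into the block-diagonal
`2g × 2g` matrix `J_{2g}` with `g` diagonal blocks equal to `J = !![0,1;-1,0]`. -/
def Jmat (g : ℕ) : Matrix (Fin (2 * g)) (Fin (2 * g)) ℝ :=
  Matrix.of fun i j =>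
    if (i : ℕ) / 2 = (j : ℕ) / 2 then
      (if (i : ℕ) % 2 = 0 ∧ (j : ℕ) % 2 = 1 then 1
       else if (i : ℕ) % 2 = 1 ∧ (j : ℕ) % 2 = 0 then -1 else 0)
    else 0

/-- `P_k`, the `2 × 2g` matrix `(I I ⋯ I 0 ⋯ 0)` consisting of `k` copies of the
`2×2` identity matrix followed by `g - k` zero `2×2` blocks. -/
def Pmat (g k : ℕ) : Matrix (Fin 2) (Fin (2 * g)) ℝ :=
  Matrix.of fun i j => if (j : ℕ) < 2 * k ∧ (j : ℕ) % 2 = (i : ℕ) then 1 else 0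

namespace Matrix

variable {l m n o R : Type*}

/-- The block row `(M b)_b`, with columns indexed by `m × o` as for `Matrix.blockDiagonal`. -/
def blockRow (M : o → Matrix l m R) : Matrix l (m × o) R :=
  of fun i j => M j.2 i j.1

@[simp]
theorem blockRow_apply (M : o → Matrix l m R) (i : l) (j : m) (b : o) :
    blockRow M i (j, b) = M b i j :=
  rfl

theorem blockRow_mul_blockDiagonal [Fintype m] [Fintype o] [DecidableEq o]
    [NonUnitalNonAssocSemiring R] (M : o → Matrix l m R) (N : o → Matrix m n R) :
    blockRow M * blockDiagonal N = blockRow fun b => M b * N b := by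
  ext i ⟨j, b⟩
  simp [mul_apply, blockDiagonal_apply, Fintype.sum_prod_type]

theorem blockRow_mul_transpose_blockRow [Fintype m] [Fintype o] [NonUnitalNonAssocSemiring R]
    (M N : o → Matrix l m R) :
    blockRow M * (blockRow N)ᵀ = ∑ b, M b * (N b)ᵀ := by
  ext i j
  simp only [mul_apply, Fintype.sum_prod_type, transpose_apply, blockRow_apply, sum_apply]
  exact Finset.sum_comm

theorem mul_mul_transpose_eq_smul_of_transpose_mul_mul_eq_smul [Fintype n] [DecidableEq n]
    [CommRing R] {J A : Matrix n n R} {c : R} (hJ : J * J = -1) (hc : c * c = 1)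
    (h : Aᵀ * J * A = c • J) : A * J * Aᵀ = c • J := by
  have hleft : (-c • (J * Aᵀ * J)) * A = 1 := by
    rw [smul_mul_assoc, Matrix.mul_assoc, Matrix.mul_assoc, ← Matrix.mul_assoc Aᵀ, h,
      Matrix.mul_smul, smul_smul, hJ]
    simp [hc]
  have hright : A * (J * Aᵀ * J) = -c • 1 := by
    have := congrArg (c • ·) (mul_eq_one_comm.mp hleft)
    simpa [Matrix.mul_smul, smul_smul, hc, neg_eq_iff_eq_neg] using this
  calc A * J * Aᵀ = A * (J * Aᵀ * J) * -J := by simp [Matrix.mul_assoc, hJ]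
    _ = c • J := by rw [hright]; simp

theorem mul_mul_transpose_eq_det_smul [CommRing R] (M : Matrix (Fin 2) (Fin 2) R) :
    M * !![0, 1; -1, 0] * Mᵀ = M.det • !![0, 1; -1, 0] := by
  ext i j
  fin_cases i <;> fin_cases j <;>
    simp [mul_apply, Fin.sum_univ_two, det_fin_two] <;> ring

end Matrix

def blockIndex (g : ℕ) : Fin 2 × Fin g ≃ Fin (2 * g) :=
  (Equiv.prodComm _ _).trans (finProdFinEquiv.trans (finCongr (mul_comm g 2)))

theorem blockIndex_val {g : ℕ} (p : Fin 2 × Fin g) : (blockIndex g p : ℕ) = p.1 + 2 * p.2 :=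
  rfl

theorem Jmat_submatrix_blockIndex (g : ℕ) :
    (Jmat g).submatrix (blockIndex g) (blockIndex g) = blockDiagonal fun _ => !![0, 1; -1, 0] := by
  ext ⟨t, b⟩ ⟨t', b'⟩
  have hdiv : ∀ (s : Fin 2) (c : Fin g), ((s : ℕ) + 2 * c) / 2 = c := fun s c => by omega
  have hmod : ∀ (s : Fin 2) (c : Fin g), ((s : ℕ) + 2 * c) % 2 = s := fun s c => by omega
  simp only [submatrix_apply, Jmat, of_apply, blockIndex_val, blockDiagonal_apply, hdiv, hmod,
    Fin.val_inj]
  split_ifs <;> fin_cases t <;> fin_cases t' <;> simp_all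

theorem Pmat_submatrix_blockIndex (g k : ℕ) :
    (Pmat g k).submatrix id (blockIndex g) =
      blockRow fun b : Fin g => if (b : ℕ) < k then 1 else 0 := by
  ext i ⟨t, b⟩
  have hcond : ((t : ℕ) + 2 * b < 2 * k ∧ ((t : ℕ) + 2 * b) % 2 = i) ↔ ((b : ℕ) < k ∧ t = i) := by
    rw [Fin.ext_iff]; omega
  simp only [submatrix_apply, Pmat, of_apply, blockIndex_val, blockRow_apply, id, hcond]
  by_cases hb : (b : ℕ) < k <;> simp [hb, one_apply, eq_comm]

theorem Jmat_eq_submatrix (g : ℕ) :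
    Jmat g = (blockDiagonal fun _ : Fin g => !![(0 : ℝ), 1; -1, 0]).submatrix
      (blockIndex g).symm (blockIndex g).symm := by
  rw [← Jmat_submatrix_blockIndex, submatrix_submatrix]
  simp

theorem Pmat_eq_submatrix (g k : ℕ) :
    Pmat g k = (blockRow fun b : Fin g =>
      if (b : ℕ) < k then (1 : Matrix (Fin 2) (Fin 2) ℝ) else 0).submatrix id (blockIndex g).symm := by
  rw [← Pmat_submatrix_blockIndex, submatrix_submatrix]
  simp

theorem Jmat_mul_self (g : ℕ) : Jmat g * Jmat g = -1 := by
  have hJ : !![(0 : ℝ), 1; -1, 0] * !![0, 1; -1, 0] = -1 := by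
    ext i j; fin_cases i <;> fin_cases j <;> simp
  rw [Jmat_eq_submatrix, submatrix_mul_equiv, ← blockDiagonal_mul, funext fun _ => hJ,
    show (fun _ : Fin g => (-1 : Matrix (Fin 2) (Fin 2) ℝ)) = -1 from rfl,
    blockDiagonal_neg, blockDiagonal_one]
  exact congrArg Neg.neg (submatrix_one_equiv (blockIndex g).symm)

theorem Pmat_mul_Jmat_mul_transpose {g k : ℕ} (hkg : k ≤ g) :
    Pmat g k * Jmat g * (Pmat g k)ᵀ = (k : ℝ) • !![0, 1; -1, 0] := by
  rw [Pmat_eq_submatrix, Jmat_eq_submatrix, transpose_submatrix, submatrix_mul_equiv,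
    submatrix_mul_equiv, submatrix_id_id, blockRow_mul_blockDiagonal,
    blockRow_mul_transpose_blockRow]
  calc ∑ b : Fin g, ((if (b : ℕ) < k then 1 else 0) * !![(0 : ℝ), 1; -1, 0]) *
        (if (b : ℕ) < k then 1 else 0)ᵀ
      = ∑ b : Fin g, if (b : ℕ) < k then !![(0 : ℝ), 1; -1, 0] else 0 := by
        refine Finset.sum_congr rfl fun b _ => ?_
        split_ifs <;> simp
    _ = (k : ℝ) • !![0, 1; -1, 0] := by
        rw [Finset.sum_ite, Finset.sum_const_zero, add_zero, Finset.sum_const,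
          Fin.card_filter_val_lt, min_eq_right hkg, Nat.cast_smul_eq_nsmul]

theorem mul_eq_mul_det_of_Pmat_mul_eq {g k l : ℕ} (hkg : k ≤ g) (hlg : l ≤ g)
    {A : Matrix (Fin (2 * g)) (Fin (2 * g)) ℝ} {B : Matrix (Fin 2) (Fin 2) ℝ} {ε : ℝ}
    (hA : A * Jmat g * Aᵀ = ε • Jmat g) (hPA : Pmat g k * A = B * Pmat g l) :
    ε * k = l * B.det := by
  have hJ : (ε * k) • !![(0 : ℝ), 1; -1, 0] = (l * B.det) • !![0, 1; -1, 0] :=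
    calc (ε * k) • !![(0 : ℝ), 1; -1, 0] = Pmat g k * (A * Jmat g * Aᵀ) * (Pmat g k)ᵀ := by
          rw [hA, Matrix.mul_smul, Matrix.smul_mul, Pmat_mul_Jmat_mul_transpose hkg, smul_smul]
      _ = (Pmat g k * A) * Jmat g * (Pmat g k * A)ᵀ := by
          rw [transpose_mul]; simp only [Matrix.mul_assoc]
      _ = B * (Pmat g l * Jmat g * (Pmat g l)ᵀ) * Bᵀ := by
          rw [hPA, transpose_mul]; simp only [Matrix.mul_assoc]
      _ = (l * B.det) • !![0, 1; -1, 0] := by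
          rw [Pmat_mul_Jmat_mul_transpose hlg, Matrix.mul_smul, Matrix.smul_mul,
            mul_mul_transpose_eq_det_smul, smul_smul]
  simpa using congrFun (congrFun hJ 0) 1

theorem no_generalized_symplectic_intertwiner_general
    (g k l : ℕ) (hkl : k < l) (hlg : l ≤ g) :
    ¬ ∃ (A : Matrix (Fin (2 * g)) (Fin (2 * g)) ℝ)
        (B : Matrix (Fin 2) (Fin 2) ℤ),
        (Aᵀ * Jmat g * A = Jmat g ∨ Aᵀ * Jmat g * A = -(Jmat g)) ∧
        (B.det = 1 ∨ B.det = -1) ∧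
        Pmat g k * A = B.map (Int.cast : ℤ → ℝ) * Pmat g l := by
  rintro ⟨A, B, hA, hB, hPA⟩
  obtain ⟨ε, hε, hAJ⟩ : ∃ ε : ℝ, (ε = 1 ∨ ε = -1) ∧ A * Jmat g * Aᵀ = ε • Jmat g := by
    rcases hA with h | h
    · exact ⟨1, .inl rfl, mul_mul_transpose_eq_smul_of_transpose_mul_mul_eq_smul
        (Jmat_mul_self g) (one_mul 1) (by rwa [one_smul])⟩
    · exact ⟨-1, .inr rfl, mul_mul_transpose_eq_smul_of_transpose_mul_mul_eq_smul
        (Jmat_mul_self g) (by norm_num) (by rwa [neg_one_smul])⟩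
  have hkl' : (k : ℝ) < l := by exact_mod_cast hkl
  have hdet := mul_eq_mul_det_of_Pmat_mul_eq (hkl.le.trans hlg) hlg hAJ hPA
  rw [← Int.cast_det] at hdet
  rcases hB with h | h <;> rcases hε with rfl | rfl <;> simp only [h] at hdet <;> push_cast at hdet <;>
    linarith [k.cast_nonneg (α := ℝ)]

/-- Proposition 7.2: for `g ≥ 2` and `1 ≤ k < l ≤ g` there are no
`A ∈ Sp^±(2g, ℝ)` and `B ∈ GL(2, ℤ)` with `P_k · A = B · P_l`. -/
theorem no_generalized_symplectic_intertwiner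
    (g k l : ℕ) (hg : 2 ≤ g) (hk : 1 ≤ k) (hkl : k < l) (hlg : l ≤ g) :
    ¬ ∃ (A : Matrix (Fin (2 * g)) (Fin (2 * g)) ℝ)
        (B : Matrix (Fin 2) (Fin 2) ℤ),
        (Aᵀ * Jmat g * A = Jmat g ∨ Aᵀ * Jmat g * A = -(Jmat g)) ∧
        (B.det = 1 ∨ B.det = -1) ∧
        Pmat g k * A = B.map (Int.cast : ℤ → ℝ) * Pmat g l :=
  no_generalized_symplectic_intertwiner_general g k l hkl hlg
end

section
/- Let g ≥ 1, let k, l be integers with 1 ≤ k ≤ g and 1 ≤ l ≤ g, let A be a real 2g×2g matrix with AᵀJ_{2g}A = J_{2g} or AᵀJ_{2g}A = −J_{2g}, and let B be an integer 2×2 matrix of determinant 1 or −1 such that P_k · A = B · P_l. Let Γ be the 2k×2g matrix consisting of the first 2k rows of A, and let K be the 2g×2g matrix, viewed as a g×g array of 2×2 blocks, whose (i,j) block equals J for 1 ≤ i, j ≤ l and is zero otherwise. Then the real 2g×2g matrix ΓᵀJ_{2k}Γ − (det(B)/k)·K has rank at most 2k − 2. -/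
open Matrix

/-- The `2g × 2g` matrix `K`, viewed as a `g × g` array of `2×2` blocks, whose
`(i,j)` block equals `J = !![0,1;-1,0]` for `1 ≤ i, j ≤ l` and vanishes
otherwise. -/
def Kmat (g l : ℕ) : Matrix (Fin (2 * g)) (Fin (2 * g)) ℝ :=
  Matrix.of fun i j =>
    if (i : ℕ) < 2 * l ∧ (j : ℕ) < 2 * l then
      (if (i : ℕ) % 2 = 0 ∧ (j : ℕ) % 2 = 1 then 1
       else if (i : ℕ) % 2 = 1 ∧ (j : ℕ) % 2 = 0 then -1 else 0)
    else 0

/-! Since `K_{g,l} = P_lᵀ J P_l` and `Bᵀ J B = det B · J` for every `2 × 2` matrix `B`, the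
relation `P_k Γ = B P_l` gives `Γᵀ K_{k,k} Γ = det B · K_{g,l}`. So the matrix in question is
`Γᵀ (J_{2k} − K_{k,k} / k) Γ`, and `J_{2k} − K_{k,k} / k` kills the two independent columns of
`P_kᵀ`, because `J_{2k} P_kᵀ = P_kᵀ J` and `P_k P_kᵀ = k I`. -/

def J2 (R : Type*) [Ring R] : Matrix (Fin 2) (Fin 2) R := !![0, 1; -1, 0]

lemma transpose_mul_J2_mul {R : Type*} [CommRing R] (B : Matrix (Fin 2) (Fin 2) R) :
    Bᵀ * J2 R * B = B.det • J2 R := by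
  ext i j
  fin_cases i <;> fin_cases j <;>
    simp [Matrix.mul_apply, Fin.sum_univ_two, J2, Matrix.det_fin_two] <;> ring

lemma sum_range_two_mul_mod_two {M : Type*} [AddCommMonoid M] (f : ℕ → M) (k : ℕ) :
    ∑ n ∈ Finset.range (2 * k), f (n % 2) = k • (f 0 + f 1) := by
  induction k with
  | zero => simp
  | succ k ih =>
    rw [Nat.mul_succ, Finset.sum_range_succ, Finset.sum_range_succ, ih, succ_nsmul,
      Nat.mul_add_mod_self_left, Nat.mul_mod_right, add_assoc]

lemma Kmat_eq_transpose_Pmat_mul (g l : ℕ) : Kmat g l = (Pmat g l)ᵀ * J2 ℝ * Pmat g l := by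
  ext i j
  simp only [Kmat, Pmat, J2, Matrix.mul_apply, Fin.sum_univ_two, Matrix.transpose_apply,
    Matrix.of_apply, Matrix.cons_val', Matrix.cons_val_zero, Matrix.cons_val_one,
    Matrix.empty_val', Matrix.cons_val_fin_one, Fin.val_zero, Fin.val_one]
  split_ifs <;> first | ring1 | (exfalso; omega)

lemma Pmat_mul_transpose_Pmat (k : ℕ) : Pmat k k * (Pmat k k)ᵀ = (k : ℝ) • 1 := by
  ext i i'
  have hsum := sum_range_two_mul_mod_two
    (fun r => if r = (i' : ℕ) ∧ r = (i : ℕ) then (1 : ℝ) else 0) k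
  rw [← Fin.sum_univ_eq_sum_range (fun n => if n % 2 = (i' : ℕ) ∧ n % 2 = (i : ℕ)
    then (1 : ℝ) else 0)] at hsum
  simp only [Matrix.mul_apply, Matrix.transpose_apply, Pmat, Matrix.of_apply, Fin.is_lt,
    true_and, mul_ite, mul_one, mul_zero, ← ite_and]
  rw [hsum]
  fin_cases i <;> fin_cases i' <;> simp

lemma Jmat_mul_transpose_Pmat (k : ℕ) : Jmat k * (Pmat k k)ᵀ = (Pmat k k)ᵀ * J2 ℝ := by
  ext i r
  have hi := i.is_lt
  have hr := r.is_lt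
  rw [Matrix.mul_apply, Finset.sum_eq_single ⟨(i : ℕ) / 2 * 2 + r, by omega⟩]
  · fin_cases r
    · simp [Matrix.mul_apply, Fin.sum_univ_two, Jmat, Pmat, J2]
    · simp [Matrix.mul_apply, Fin.sum_univ_two, Jmat, Pmat, J2]
      omega
  · intro j _ hj
    have hj' : (j : ℕ) ≠ (i : ℕ) / 2 * 2 + r := fun h => hj (Fin.ext h)
    simp only [Jmat, Pmat, Matrix.transpose_apply, Matrix.of_apply]
    split_ifs <;> first | ring1 | (exfalso; omega)
  · simp

lemma Pmat_mul_eq_Pmat_mul_submatrix {g k : ℕ} (hkg : 2 * k ≤ 2 * g)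
    (A : Matrix (Fin (2 * g)) (Fin (2 * g)) ℝ) :
    Pmat g k * A = Pmat k k * A.submatrix (Fin.castLE hkg) id := by
  ext i j
  refine (Fintype.sum_of_injective (Fin.castLE hkg) (Fin.castLE_injective hkg) _ _ ?_ ?_).symm
  · rintro m hm
    have : ¬ (m : ℕ) < 2 * k := fun hlt => hm ⟨⟨m, hlt⟩, rfl⟩
    simp [Pmat, this]
  · intro m
    simp [Pmat]

lemma Jmat_sub_Kmat_mul_transpose_Pmat {k : ℕ} (hk : k ≠ 0) :
    (Jmat k - (k : ℝ)⁻¹ • Kmat k k) * (Pmat k k)ᵀ = 0 := by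
  rw [Matrix.sub_mul, Jmat_mul_transpose_Pmat, Matrix.smul_mul, Kmat_eq_transpose_Pmat_mul,
    Matrix.mul_assoc, Pmat_mul_transpose_Pmat, Matrix.mul_smul, Matrix.mul_one, smul_smul,
    inv_mul_cancel₀ (Nat.cast_ne_zero.2 hk), one_smul, sub_self]

lemma two_le_rank_transpose_Pmat {k : ℕ} (hk : k ≠ 0) : 2 ≤ (Pmat k k)ᵀ.rank := by
  calc 2 = (Pmat k k * (Pmat k k)ᵀ).rank := by
        rw [Pmat_mul_transpose_Pmat, Matrix.rank_smul_of_mem_nonZeroDivisors _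
          (mem_nonZeroDivisors_of_ne_zero (Nat.cast_ne_zero.2 hk)), Matrix.rank_one,
          Fintype.card_fin]
    _ ≤ (Pmat k k)ᵀ.rank := Matrix.rank_mul_le_right _ _

lemma rank_Jmat_sub_Kmat_le (k : ℕ) : (Jmat k - (k : ℝ)⁻¹ • Kmat k k).rank ≤ 2 * k - 2 := by
  rcases Nat.eq_zero_or_pos k with rfl | hk
  · simpa using Matrix.rank_le_width (Jmat 0 - ((0 : ℕ) : ℝ)⁻¹ • Kmat 0 0)
  have := Matrix.rank_add_rank_le_card_of_mul_eq_zero (Jmat_sub_Kmat_mul_transpose_Pmat hk.ne')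
  have := two_le_rank_transpose_Pmat hk.ne'
  rw [Fintype.card_fin] at *
  omega

lemma transpose_mul_Kmat_mul_of_Pmat_mul_eq {g k l : ℕ} {Γ : Matrix (Fin (2 * k)) (Fin (2 * g)) ℝ}
    {B : Matrix (Fin 2) (Fin 2) ℝ} (h : Pmat k k * Γ = B * Pmat g l) :
    Γᵀ * Kmat k k * Γ = B.det • Kmat g l := by
  calc Γᵀ * Kmat k k * Γ = (Pmat k k * Γ)ᵀ * J2 ℝ * (Pmat k k * Γ) := by
        simp only [Kmat_eq_transpose_Pmat_mul, Matrix.transpose_mul, Matrix.mul_assoc]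
    _ = (Pmat g l)ᵀ * (Bᵀ * J2 ℝ * B) * Pmat g l := by
        simp only [h, Matrix.transpose_mul, Matrix.mul_assoc]
    _ = B.det • Kmat g l := by
        rw [transpose_mul_J2_mul, Matrix.mul_smul, Matrix.smul_mul, Kmat_eq_transpose_Pmat_mul]

/-- The key rank estimate in the proof of Proposition 7.2: if `A ∈ Sp^±(2g, ℝ)`
and `B ∈ GL(2, ℤ)` satisfy `P_k · A = B · P_l`, and `Γ` denotes the matrix of
the first `2k` rows of `A`, then `Γᵀ J_{2k} Γ − (det B / k)·K` has rank at most
`2k − 2`. -/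
theorem rank_gamma_form_le
    (g k l : ℕ) (hkg : k ≤ g)
    (A : Matrix (Fin (2 * g)) (Fin (2 * g)) ℝ)
    (B : Matrix (Fin 2) (Fin 2) ℤ)
    (hPA : Pmat g k * A = B.map (Int.cast : ℤ → ℝ) * Pmat g l)
    (Γ : Matrix (Fin (2 * k)) (Fin (2 * g)) ℝ)
    (hΓ : Γ = A.submatrix (Fin.castLE (by omega : 2 * k ≤ 2 * g)) id) :
    (Γᵀ * Jmat k * Γ - ((B.det : ℝ) / (k : ℝ)) • Kmat g l).rank ≤ 2 * k - 2 := by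
  have hΓB : Pmat k k * Γ = B.map (Int.cast : ℤ → ℝ) * Pmat g l := by
    rw [hΓ, ← Pmat_mul_eq_Pmat_mul_submatrix, hPA]
  have hdet : (B.map (Int.cast : ℤ → ℝ)).det = (B.det : ℝ) :=
    (RingHom.map_det (Int.castRingHom ℝ) B).symm
  have hform : Γᵀ * Jmat k * Γ - ((B.det : ℝ) / (k : ℝ)) • Kmat g l
      = Γᵀ * ((Jmat k - (k : ℝ)⁻¹ • Kmat k k) * Γ) := by
    rw [Matrix.sub_mul, Matrix.mul_sub, Matrix.smul_mul, Matrix.mul_smul, ← Matrix.mul_assoc,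
      ← Matrix.mul_assoc, transpose_mul_Kmat_mul_of_Pmat_mul_eq hΓB, hdet, smul_smul,
      inv_mul_eq_div]
  rw [hform]
  exact (Matrix.rank_mul_le_right _ _).trans
    ((Matrix.rank_mul_le_left _ _).trans (rank_Jmat_sub_Kmat_le k))
end
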